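/- Let d, Nα, Nβ ≥ 1, N = Nα + Nβ, let X_1,…,X_N ⊆ ℝ^d be open sets, and let u_1,…,u_N with u_i : X_i → ℝ satisfy the splitting inequality for the cost c. Suppose equality u_1(x_1⁰) + Σ_{i=2}^{Nα} u_i(x_i) + Σ_{j=1}^{Nβ} u_{Nα+j}(y_j) = c(x_1⁰, x_2,…,x_{Nα}, y_1,…,y_{Nβ}) holds at a point (x_1⁰, x_2,…,x_{Nα}, y_1,…,y_{Nβ}) ∈ X_1×…×X_N. Then: (i) if u_1 is differentiable at x_1⁰, its gradient is ∇u_1(x_1⁰) = Σ_{j=1}^{Nβ} y_j*; (ii) if, for some p ∈ {1,…,Nβ}, u_{Nα+p} is differentiable at y_p, then ∇u_{Nα+p}(y_p) = Σ_{i=1}^{Nα} x_i*, where x* := (−2x¹, x²,…,x^d). -/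

import Mathlib

open MeasureTheory RealInnerProductSpace

noncomputable section

/-- The "starred" vector `y* = (-2 y¹, y², …, y^d)`. -/
def ystar {d : ℕ} (hd : 0 < d) (y : EuclideanSpace ℝ (Fin d)) : EuclideanSpace ℝ (Fin d) :=
  y - (3 * y ⟨0, hd⟩) • EuclideanSpace.single (⟨0, hd⟩ : Fin d) (1 : ℝ)

/-- The cost `c(x_1,…,x_Nα,y_1,…,y_Nβ) = ∑_i ∑_j x_i · y_j*`, in block coordinates. -/
def costxy {d Nα Nβ : ℕ} (hd : 0 < d)
    (x : Fin Nα → EuclideanSpace ℝ (Fin d)) (y : Fin Nβ → EuclideanSpace ℝ (Fin d)) : ℝ :=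
  ∑ i : Fin Nα, ∑ j : Fin Nβ, ⟪x i, ystar hd (y j)⟫

/-! The cost is linear in each variable separately, and `*` is self-adjoint. So, freezing all
variables but one at the equality point, the splitting inequality says that `z ↦ u(z) - ⟪z, v⟫`
attains a local maximum there, where `v` is the sum of the starred partners of the other
block; the first-order condition gives `∇u = v`. -/

theorem inner_ystar_left {d : ℕ} (hd : 0 < d) (a b : EuclideanSpace ℝ (Fin d)) :
    ⟪ystar hd a, b⟫ = ⟪a, ystar hd b⟫ := by
  simp only [ystar, inner_sub_left, inner_sub_right, real_inner_smul_left, real_inner_smul_right,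
    EuclideanSpace.inner_single_left, EuclideanSpace.inner_single_right, Real.ringHom_apply,
    one_mul, sub_right_inj]
  ring

theorem costxy_eq_sum_inner_left {d Nα Nβ : ℕ} (hd : 0 < d)
    (x : Fin Nα → EuclideanSpace ℝ (Fin d)) (y : Fin Nβ → EuclideanSpace ℝ (Fin d)) :
    costxy hd x y = ∑ i, ⟪x i, ∑ j, ystar hd (y j)⟫ := by
  simp only [costxy, inner_sum]

theorem costxy_eq_sum_inner_right {d Nα Nβ : ℕ} (hd : 0 < d)
    (x : Fin Nα → EuclideanSpace ℝ (Fin d)) (y : Fin Nβ → EuclideanSpace ℝ (Fin d)) :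
    costxy hd x y = ∑ j, ⟪y j, ∑ i, ystar hd (x i)⟫ := by
  simp only [costxy, inner_sum]
  refine Finset.sum_comm.trans (Finset.sum_congr rfl fun j _ => Finset.sum_congr rfl fun i _ => ?_)
  rw [← inner_ystar_left, real_inner_comm]

theorem isLocalMax_of_sum_le_sum {ι E : Type*} [Fintype ι] [DecidableEq ι] [TopologicalSpace E]
    {X : ι → Set E} {f : ι → E → ℝ} {x : ι → E} (hx : ∀ i, x i ∈ X i)
    (hle : ∀ x' : ι → E, (∀ i, x' i ∈ X i) → ∑ i, f i (x' i) ≤ ∑ i, f i (x i))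
    {a : ι} (ha : X a ∈ nhds (x a)) : IsLocalMax (f a) (x a) := by
  filter_upwards [ha] with z hz
  have hmem : ∀ i, Function.update x a z i ∈ X i := by
    intro i
    rcases eq_or_ne i a with rfl | hne
    · simpa using hz
    · simpa [Function.update_of_ne hne] using hx i
  have := hle _ hmem
  simp only [Function.apply_update f x a z] at this
  rwa [Finset.sum_update_of_mem (Finset.mem_univ a), ← Finset.add_sum_erase _ _ (Finset.mem_univ a),
    Finset.sdiff_singleton_eq_erase, add_le_add_iff_right] at this

theorem HasGradientAt.eq_of_isLocalMax_sub_inner {F : Type*} [NormedAddCommGroup F]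
    [InnerProductSpace ℝ F] [CompleteSpace F] {u : F → ℝ} {g v x₀ : F}
    (hg : HasGradientAt u g x₀) (hmax : IsLocalMax (fun z => u z - ⟪z, v⟫) x₀) : g = v := by
  have hv : HasFDerivAt (fun z => ⟪z, v⟫) (InnerProductSpace.toDual ℝ F v : F →L[ℝ] ℝ) x₀ := by
    convert (InnerProductSpace.toDual ℝ F v : F →L[ℝ] ℝ).hasFDerivAt (x := x₀) using 1
    ext z
    simp [real_inner_comm]
  have h0 := hmax.hasFDerivAt_eq_zero (hg.hasFDerivAt.sub hv)
  rw [← map_sub] at h0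
  exact sub_eq_zero.1 ((InnerProductSpace.toDual ℝ F).map_eq_zero_iff.1 h0)

theorem HasGradientAt.eq_of_sum_add_le_sum_inner {ι F : Type*} [Fintype ι] [DecidableEq ι]
    [NormedAddCommGroup F] [InnerProductSpace ℝ F] [CompleteSpace F]
    {X : ι → Set F} {u : ι → F → ℝ} {x : ι → F} {v : F} {B : ℝ}
    (hle : ∀ x' : ι → F, (∀ i, x' i ∈ X i) → ∑ i, u i (x' i) + B ≤ ∑ i, ⟪x' i, v⟫)
    (hx : ∀ i, x i ∈ X i) (heq : ∑ i, u i (x i) + B = ∑ i, ⟪x i, v⟫)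
    {a : ι} (ha : IsOpen (X a)) {g : F} (hg : HasGradientAt (u a) g (x a)) : g = v := by
  refine hg.eq_of_isLocalMax_sub_inner
    (isLocalMax_of_sum_le_sum (f := fun i z => u i z - ⟪z, v⟫) hx (fun x' hx' => ?_)
      (ha.mem_nhds (hx a)))
  simp only [Finset.sum_sub_distrib]
  linarith [hle x' hx']

theorem stmt_8_general {d Nα Nβ : ℕ} (hd : 0 < d) (hNα : 0 < Nα)
    (Xa : Fin Nα → Set (EuclideanSpace ℝ (Fin d)))
    (Xb : Fin Nβ → Set (EuclideanSpace ℝ (Fin d)))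
    (hXa : ∀ i, IsOpen (Xa i)) (hXb : ∀ j, IsOpen (Xb j))
    (ua : Fin Nα → EuclideanSpace ℝ (Fin d) → ℝ)
    (ub : Fin Nβ → EuclideanSpace ℝ (Fin d) → ℝ)
    (hsplit : ∀ (x : Fin Nα → EuclideanSpace ℝ (Fin d))
        (y : Fin Nβ → EuclideanSpace ℝ (Fin d)),
        (∀ i, x i ∈ Xa i) → (∀ j, y j ∈ Xb j) →
        ∑ i, ua i (x i) + ∑ j, ub j (y j) ≤ costxy hd x y)
    (x : Fin Nα → EuclideanSpace ℝ (Fin d)) (y : Fin Nβ → EuclideanSpace ℝ (Fin d))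
    (hx : ∀ i, x i ∈ Xa i) (hy : ∀ j, y j ∈ Xb j)
    (heq : ∑ i, ua i (x i) + ∑ j, ub j (y j) = costxy hd x y) :
    (∀ g : EuclideanSpace ℝ (Fin d),
      HasGradientAt (ua ⟨0, hNα⟩) g (x ⟨0, hNα⟩) → g = ∑ j, ystar hd (y j)) ∧
    (∀ p : Fin Nβ, ∀ g : EuclideanSpace ℝ (Fin d),
      HasGradientAt (ub p) g (y p) → g = ∑ i, ystar hd (x i)) := by
  constructor
  · intro g hg
    refine hg.eq_of_sum_add_le_sum_inner (B := ∑ j, ub j (y j)) (fun x' hx' => ?_) hx ?_ (hXa _)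
    · simpa only [costxy_eq_sum_inner_left] using hsplit x' y hx' hy
    · rwa [← costxy_eq_sum_inner_left]
  · intro p g hg
    refine hg.eq_of_sum_add_le_sum_inner (B := ∑ i, ua i (x i)) (fun y' hy' => ?_) hy ?_ (hXb p)
    · simpa only [add_comm, costxy_eq_sum_inner_right] using hsplit x y' hx hy'
    · rwa [add_comm, ← costxy_eq_sum_inner_right]

theorem stmt_8 {d Nα Nβ : ℕ} (hd : 0 < d) (hNα : 0 < Nα) (hNβ : 0 < Nβ)
    (Xa : Fin Nα → Set (EuclideanSpace ℝ (Fin d)))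
    (Xb : Fin Nβ → Set (EuclideanSpace ℝ (Fin d)))
    (hXa : ∀ i, IsOpen (Xa i)) (hXb : ∀ j, IsOpen (Xb j))
    (ua : Fin Nα → EuclideanSpace ℝ (Fin d) → ℝ)
    (ub : Fin Nβ → EuclideanSpace ℝ (Fin d) → ℝ)
    (hsplit : ∀ (x : Fin Nα → EuclideanSpace ℝ (Fin d))
        (y : Fin Nβ → EuclideanSpace ℝ (Fin d)),
        (∀ i, x i ∈ Xa i) → (∀ j, y j ∈ Xb j) →
        ∑ i, ua i (x i) + ∑ j, ub j (y j) ≤ costxy hd x y)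
    (x : Fin Nα → EuclideanSpace ℝ (Fin d)) (y : Fin Nβ → EuclideanSpace ℝ (Fin d))
    (hx : ∀ i, x i ∈ Xa i) (hy : ∀ j, y j ∈ Xb j)
    (heq : ∑ i, ua i (x i) + ∑ j, ub j (y j) = costxy hd x y) :
    (∀ g : EuclideanSpace ℝ (Fin d),
      HasGradientAt (ua ⟨0, hNα⟩) g (x ⟨0, hNα⟩) → g = ∑ j, ystar hd (y j)) ∧
    (∀ p : Fin Nβ, ∀ g : EuclideanSpace ℝ (Fin d),
      HasGradientAt (ub p) g (y p) → g = ∑ i, ystar hd (x i)) :=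
  stmt_8_general hd hNα Xa Xb hXa hXb ua ub hsplit x y hx hy heq
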